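/- arXiv:2104.10471 — 4 statements merged into one kernel-verified Lean document; each statement's English description precedes it below -/
import Mathlib

section
/- Let X be an n×p real matrix, K a p×p positive definite matrix, σ² > 0, G = XᵀX + σ²K⁻¹, and for an index subset s ⊆ {1,…,n} with complement sᶜ, let G_{sᶜ} = X_{sᶜ}ᵀX_{sᶜ} + σ²K⁻¹ and Z_s = I_k − X_s G⁻¹ X_sᵀ. Then Z_s⁻¹ = I_k + X_s G_{sᶜ}⁻¹ X_sᵀ. -/
open Matrix

theorem stmt2 {n p : ℕ} (X : Matrix (Fin n) (Fin p) ℝ) (s : Finset (Fin n))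
    (K : Matrix (Fin p) (Fin p) ℝ) (hK : K.PosDef) (σ2 : ℝ) (hσ : 0 < σ2)
    (Xs : Matrix {i // i ∈ s} (Fin p) ℝ)
    (hXs : Xs = X.submatrix (fun i : {i // i ∈ s} => (i : Fin n)) id)
    (Xsc : Matrix {i // i ∈ sᶜ} (Fin p) ℝ)
    (hXsc : Xsc = X.submatrix (fun i : {i // i ∈ sᶜ} => (i : Fin n)) id)
    (G : Matrix (Fin p) (Fin p) ℝ) (hG : G = Xᵀ * X + σ2 • K⁻¹)
    (hGu : IsUnit G.det)
    (Gsc : Matrix (Fin p) (Fin p) ℝ) (hGsc : Gsc = Xscᵀ * Xsc + σ2 • K⁻¹)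
    (hGscu : IsUnit Gsc.det)
    (Zs : Matrix {i // i ∈ s} {i // i ∈ s} ℝ) (hZs : Zs = 1 - Xs * G⁻¹ * Xsᵀ)
    (hZu : IsUnit Zs.det) :
    Zs⁻¹ = 1 + Xs * Gsc⁻¹ * Xsᵀ := by
  have hsplit : Xᵀ * X = Xsᵀ * Xs + Xscᵀ * Xsc := by
    ext a b
    simp only [hXs, hXsc, Matrix.mul_apply, Matrix.add_apply, Matrix.transpose_apply,
      Matrix.submatrix_apply, id]
    rw [Finset.sum_coe_sort s (fun i => X i a * X i b),
      Finset.sum_coe_sort sᶜ (fun i => X i a * X i b)]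
    rw [← Finset.sum_add_sum_compl s (fun i => X i a * X i b)]
  have hGG : Xsᵀ * Xs = G - Gsc := by
    rw [hG, hGsc, hsplit]; abel
  have h1 : G⁻¹ * G = 1 := Matrix.nonsing_inv_mul _ hGu
  have h2 : Gsc * Gsc⁻¹ = 1 := Matrix.mul_nonsing_inv _ hGscu
  have key : G⁻¹ * (Xsᵀ * Xs) * Gsc⁻¹ = Gsc⁻¹ - G⁻¹ := by
    rw [hGG, mul_sub, h1, sub_mul, one_mul, mul_assoc, h2, mul_one]
  have hAB : (Xs * G⁻¹ * Xsᵀ) * (Xs * Gsc⁻¹ * Xsᵀ)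
      = Xs * Gsc⁻¹ * Xsᵀ - Xs * G⁻¹ * Xsᵀ := by
    have e1 : (Xs * G⁻¹ * Xsᵀ) * (Xs * Gsc⁻¹ * Xsᵀ)
        = Xs * (G⁻¹ * (Xsᵀ * Xs) * Gsc⁻¹) * Xsᵀ := by
      simp only [Matrix.mul_assoc]
    rw [e1, key, Matrix.mul_sub, Matrix.sub_mul]
  apply Matrix.inv_eq_right_inv
  rw [hZs]
  have expand : (1 - Xs * G⁻¹ * Xsᵀ) * (1 + Xs * Gsc⁻¹ * Xsᵀ)
      = 1 + Xs * Gsc⁻¹ * Xsᵀ - Xs * G⁻¹ * Xsᵀ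
        - (Xs * G⁻¹ * Xsᵀ) * (Xs * Gsc⁻¹ * Xsᵀ) := by
    noncomm_ring
  rw [expand, hAB]; abel
end

section
/- Let ŷ = Xβ̂ with β̂ = G⁻¹Xᵀy and β̂_{sᶜ} = G_{sᶜ}⁻¹X_{sᶜ}ᵀy_{sᶜ}, where G = XᵀX + σ²K⁻¹ and G_{sᶜ} = X_{sᶜ}ᵀX_{sᶜ} + σ²K⁻¹. Then Z_s(y_s − X_s β̂_{sᶜ}) = y_s − X_s β̂, where Z_s = I_k − X_s G⁻¹ X_sᵀ; consequently ‖y_s − X_s β̂_{sᶜ}‖² = ‖Z_s⁻¹(y_s − X_s β̂)‖². -/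
open Matrix

theorem stmt6 {n p : ℕ} (X : Matrix (Fin n) (Fin p) ℝ) (y : Fin n → ℝ)
    (s : Finset (Fin n))
    (K : Matrix (Fin p) (Fin p) ℝ) (hK : K.PosDef) (σ2 : ℝ) (hσ : 0 < σ2)
    (Xs : Matrix {i // i ∈ s} (Fin p) ℝ)
    (hXs : Xs = X.submatrix (fun i : {i // i ∈ s} => (i : Fin n)) id)
    (Xsc : Matrix {i // i ∈ sᶜ} (Fin p) ℝ)
    (hXsc : Xsc = X.submatrix (fun i : {i // i ∈ sᶜ} => (i : Fin n)) id)
    (ys : {i // i ∈ s} → ℝ) (hys : ys = fun i : {i // i ∈ s} => y (i : Fin n))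
    (ysc : {i // i ∈ sᶜ} → ℝ) (hysc : ysc = fun i : {i // i ∈ sᶜ} => y (i : Fin n))
    (G : Matrix (Fin p) (Fin p) ℝ) (hG : G = Xᵀ * X + σ2 • K⁻¹)
    (hGu : IsUnit G.det)
    (Gsc : Matrix (Fin p) (Fin p) ℝ) (hGsc : Gsc = Xscᵀ * Xsc + σ2 • K⁻¹)
    (hGscu : IsUnit Gsc.det)
    (Zs : Matrix {i // i ∈ s} {i // i ∈ s} ℝ) (hZs : Zs = 1 - Xs * G⁻¹ * Xsᵀ)
    (hZu : IsUnit Zs.det)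
    (βhat : Fin p → ℝ) (hβhat : βhat = G⁻¹.mulVec (Xᵀ.mulVec y))
    (βhatsc : Fin p → ℝ) (hβhatsc : βhatsc = Gsc⁻¹.mulVec (Xscᵀ.mulVec ysc)) :
    Zs.mulVec (ys - Xs.mulVec βhatsc) = ys - Xs.mulVec βhat ∧
      ∑ i, (ys i - Xs.mulVec βhatsc i) ^ 2
        = ∑ i, ((Zs⁻¹.mulVec (ys - Xs.mulVec βhat)) i) ^ 2 := by
  have hsplit : ∀ f : Fin n → ℝ,
      ∑ k, f k = (∑ k : {i // i ∈ s}, f k) + ∑ k : {i // i ∈ sᶜ}, f k := by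
    intro f
    rw [Finset.sum_coe_sort s f, Finset.sum_coe_sort sᶜ f,
      Finset.sum_add_sum_compl]
  have hXX : Xᵀ * X = Xsᵀ * Xs + Xscᵀ * Xsc := by
    ext i j
    simp only [Matrix.add_apply, Matrix.mul_apply, Matrix.transpose_apply, hXs, hXsc,
      Matrix.submatrix_apply, id]
    exact hsplit fun k => X k i * X k j
  have hXy : Xᵀ.mulVec y = Xsᵀ.mulVec ys + Xscᵀ.mulVec ysc := by
    ext i
    simp only [Pi.add_apply, Matrix.mulVec, dotProduct, Matrix.transpose_apply,
      hXs, hXsc, hys, hysc, Matrix.submatrix_apply, id]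
    exact hsplit fun k => X k i * y k
  have hGG : G - Gsc = Xsᵀ * Xs := by
    rw [hG, hGsc, hXX]; abel
  have hGscb : Gsc.mulVec βhatsc = Xscᵀ.mulVec ysc := by
    rw [hβhatsc, Matrix.mulVec_mulVec, Matrix.mul_nonsing_inv Gsc hGscu, Matrix.one_mulVec]
  have hkey : βhatsc + G⁻¹.mulVec (Xsᵀ.mulVec (ys - Xs.mulVec βhatsc)) = βhat := by
    have h1 : Xsᵀ.mulVec (ys - Xs.mulVec βhatsc)
        = Xsᵀ.mulVec ys - G.mulVec βhatsc + Gsc.mulVec βhatsc := by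
      rw [Matrix.mulVec_sub, Matrix.mulVec_mulVec, ← hGG, Matrix.sub_mulVec]
      abel
    rw [h1, Matrix.mulVec_add, Matrix.mulVec_sub]
    simp only [Matrix.mulVec_mulVec]
    rw [Matrix.nonsing_inv_mul G hGu, Matrix.one_mulVec, ← Matrix.mulVec_mulVec βhatsc G⁻¹ Gsc, hGscb,
      hβhat, hXy, Matrix.mulVec_add]
    simp only [Matrix.mulVec_mulVec]
    abel
  have h1 : Zs.mulVec (ys - Xs.mulVec βhatsc) = ys - Xs.mulVec βhat := by
    rw [hZs, Matrix.sub_mulVec, Matrix.one_mulVec]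
    have : (Xs * G⁻¹ * Xsᵀ).mulVec (ys - Xs.mulVec βhatsc)
        = Xs.mulVec (G⁻¹.mulVec (Xsᵀ.mulVec (ys - Xs.mulVec βhatsc))) := by
      rw [Matrix.mulVec_mulVec, Matrix.mulVec_mulVec, Matrix.mul_assoc]
    rw [this, ← hkey, Matrix.mulVec_add]
    abel
  refine ⟨h1, ?_⟩
  have h2 : ys - Xs.mulVec βhatsc = Zs⁻¹.mulVec (ys - Xs.mulVec βhat) := by
    rw [← h1, Matrix.mulVec_mulVec, Matrix.nonsing_inv_mul Zs hZu, Matrix.one_mulVec]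
  refine Finset.sum_congr rfl fun i _ => ?_
  have := congrFun h2 i
  simp only [Pi.sub_apply] at this
  rw [this]
end

section
/- For all k-subsets s of {1,…,n} and ε ∈ ℝⁿ: (1/C(n−1,k−1)) · Σ_{s ∈ 𝒮} X_sᵀ ε_s ε_sᵀ X_s = Xᵀ L X, where L = diag(ε) A diag(ε) and A is the n×n matrix with diagonal entries 1 and off-diagonal entries (k−1)/(n−1). -/
/-!
Exchanging the sum over subsets with the sum over pairs of indices weights the term of `(i, i')`
by the number of `k`-subsets containing both indices: `C(n-1, k-1)` when `i = i'` and
`C(n-2, k-2)` otherwise. Dividing by `C(n-1, k-1)` gives `1` and `(k-1)/(n-1)`, the latter by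
`(n-1) C(n-2, k-2) = (k-1) C(n-1, k-1)`.
-/

open Matrix Finset

section
variable {α : Type*} [Fintype α] [DecidableEq α]

theorem sum_sum_sum_eq_sum_sum_card_smul {M : Type*} [AddCommMonoid M] (P : Finset (Finset α))
    (f : α → α → M) :
    ∑ s ∈ P, ∑ i ∈ s, ∑ i' ∈ s, f i i' = ∑ i, ∑ i', #{s ∈ P | i ∈ s ∧ i' ∈ s} • f i i' := by
  have hmem (s : Finset α) :
      ∑ i ∈ s, ∑ i' ∈ s, f i i' = ∑ i, ∑ i', if i ∈ s ∧ i' ∈ s then f i i' else 0 := by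
    simp only [ite_and, sum_ite_irrel, sum_ite_mem, univ_inter, sum_const_zero]
  simp_rw [hmem]
  rw [sum_comm]
  refine sum_congr rfl fun i _ => ?_
  rw [sum_comm]
  refine sum_congr rfl fun i' _ => ?_
  rw [← sum_filter, sum_const]

theorem card_filter_mem_powersetCard_univ {k : ℕ} (hk : 1 ≤ k) (i : α) :
    #{s ∈ powersetCard k univ | i ∈ s} = (Fintype.card α - 1).choose (k - 1) := by
  simpa using card_filter_powersetCard_subset {i} univ k (subset_univ _) (by simpa using hk)

/-- Both sides vanish for `k ≤ 1`, where `k - 1` truncates to `0`. -/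
theorem card_sub_one_mul_card_filter_mem_and_mem_powersetCard_univ (k : ℕ) {i i' : α}
    (h : i ≠ i') :
    (Fintype.card α - 1) * #{s ∈ powersetCard k univ | i ∈ s ∧ i' ∈ s}
      = (Fintype.card α - 1).choose (k - 1) * (k - 1) := by
  have hpair : #({i, i'} : Finset α) = 2 := card_pair h
  have hcard : 2 ≤ Fintype.card α := hpair ▸ card_le_univ _
  have hfilter : {s ∈ powersetCard k (univ : Finset α) | i ∈ s ∧ i' ∈ s}
      = {s ∈ powersetCard k (univ : Finset α) | {i, i'} ⊆ s} := by
    simp only [insert_subset_iff, singleton_subset_iff]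
  rw [hfilter]
  rcases Nat.lt_or_ge k 2 with hk | hk
  · have hempty : {s ∈ powersetCard k (univ : Finset α) | {i, i'} ⊆ s} = ∅ :=
      filter_eq_empty_iff.2 fun s hs hsub => by
        have := card_le_card hsub
        rw [hpair, (mem_powersetCard.1 hs).2] at this
        omega
    rw [hempty, card_empty, Nat.sub_eq_zero_of_le (by omega : k ≤ 1), mul_zero, mul_zero]
  · obtain ⟨m, hm⟩ : ∃ m, Fintype.card α = m + 2 := ⟨_, (Nat.sub_add_cancel hcard).symm⟩
    obtain ⟨l, rfl⟩ : ∃ l, k = l + 2 := ⟨k - 2, by omega⟩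
    rw [card_filter_powersetCard_subset _ _ _ (subset_univ _) (by omega), hpair, card_univ, hm]
    simpa using Nat.add_one_mul_choose_eq m l

theorem card_filter_mem_and_mem_powersetCard_univ_div_choose {K : Type*} [Field K] [CharZero K]
    {k : ℕ} (hk : 1 ≤ k) (hkα : k ≤ Fintype.card α) (i i' : α) :
    (#{s ∈ powersetCard k univ | i ∈ s ∧ i' ∈ s} : K) / (Fintype.card α - 1).choose (k - 1)
      = if i = i' then 1 else ((k : K) - 1) / ((Fintype.card α : K) - 1) := by
  have hchoose : ((Fintype.card α - 1).choose (k - 1) : K) ≠ 0 :=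
    Nat.cast_ne_zero.2 (Nat.choose_pos (by omega)).ne'
  split_ifs with h
  · subst h
    simp only [and_self, card_filter_mem_powersetCard_univ hk, div_self hchoose]
  · have hcard : 2 ≤ Fintype.card α := card_pair h ▸ card_le_univ _
    have hcard' : (Fintype.card α : K) - 1 ≠ 0 := by
      rw [sub_ne_zero, ← Nat.cast_one, Ne, Nat.cast_inj]
      omega
    rw [div_eq_div_iff hchoose hcard']
    have := congrArg (Nat.cast : ℕ → K)
      (card_sub_one_mul_card_filter_mem_and_mem_powersetCard_univ k h)
    push_cast [Nat.cast_sub (by omega : 1 ≤ Fintype.card α), Nat.cast_sub hk] at this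
    linear_combination this
end

theorem stmt13_general {n p k : ℕ} (hk : 1 ≤ k) (hkn : k ≤ n)
    (X : Matrix (Fin n) (Fin p) ℝ) (ε : Fin n → ℝ) (j j' : Fin p) :
    (1 / (Nat.choose (n - 1) (k - 1) : ℝ)) *
        ∑ s ∈ Finset.powersetCard k (Finset.univ : Finset (Fin n)),
          ∑ i ∈ s, ∑ i' ∈ s, X i j * ε i * ε i' * X i' j'
      = ∑ i : Fin n, ∑ i' : Fin n,
          X i j * ((if i = i' then (1 : ℝ) else ((k : ℝ) - 1) / ((n : ℝ) - 1))
            * ε i * ε i') * X i' j' := by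
  rw [sum_sum_sum_eq_sum_sum_card_smul _ fun i i' => X i j * ε i * ε i' * X i' j', mul_sum]
  refine sum_congr rfl fun i _ => ?_
  rw [mul_sum]
  refine sum_congr rfl fun i' _ => ?_
  have hcoeff := card_filter_mem_and_mem_powersetCard_univ_div_choose (K := ℝ) hk
    (by rwa [Fintype.card_fin]) i i'
  rw [Fintype.card_fin] at hcoeff
  rw [← hcoeff, nsmul_eq_mul]
  ring

theorem stmt13 {n p k : ℕ} (hn : 2 ≤ n) (hk : 1 ≤ k) (hkn : k ≤ n)
    (X : Matrix (Fin n) (Fin p) ℝ) (ε : Fin n → ℝ) (j j' : Fin p) :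
    (1 / (Nat.choose (n - 1) (k - 1) : ℝ)) *
        ∑ s ∈ Finset.powersetCard k (Finset.univ : Finset (Fin n)),
          ∑ i ∈ s, ∑ i' ∈ s, X i j * ε i * ε i' * X i' j'
      = ∑ i : Fin n, ∑ i' : Fin n,
          X i j * ((if i = i' then (1 : ℝ) else ((k : ℝ) - 1) / ((n : ℝ) - 1))
            * ε i * ε i') * X i' j' :=
  stmt13_general hk hkn X ε j j'
end

section
/- Let A be an n×n real matrix with A_{ii}=1 and |A_{ij}| ≤ 1, let ε₁,…,εₙ be independent mean-zero real random variables with variance σ² and fourth moments bounded by c₃, and let L = diag(ε) A diag(ε). Suppose the rows of the n×p matrix X are uniformly bounded in norm by c₄ and XᵀX/n → Σ as n → ∞, and that (1/n²)·Σ_{k≠l} A_{kl}² → 0. Then XᵀLX/n → σ²Σ in L² (each entry converges in mean square), and hence in probability. -/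
/-!
Write the `(j, j')` entry of `XᵀLX` as the quadratic form `Q = ∑ᵢ ∑ₖ bᵢₖ εᵢ εₖ` with
`bᵢₖ = Xᵢⱼ Aᵢₖ Xₖⱼ'`. Since `Aᵢᵢ = 1`, `E Q = σ² ∑ᵢ Xᵢⱼ Xᵢⱼ'`. The products `εᵢεₖ` and `εᵢ'εₖ'`
are uncorrelated unless `(i', k')` is `(i, k)` or `(k, i)`, and each has variance at most `c₃`,
so `Var Q ≤ 2 c₃ ∑ bᵢₖ² ≤ 2 c₃ c₄⁴ (n + ∑_{i ≠ k} Aᵢₖ²) = o(n²)`. Hence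
`E (Q/n - σ²Σⱼⱼ')² = Var Q / n² + (E Q / n - σ²Σⱼⱼ')² → 0`, and Markov's inequality gives
convergence in probability.
-/

open Matrix MeasureTheory ProbabilityTheory Filter
open scoped ENNReal

theorem Multiset.exists_count_pair_add_eq_one_or_disjoint {ι : Type*} [DecidableEq ι]
    {q r : ι × ι} (hq : r ≠ q) (hs : r ≠ q.swap) :
    (∃ t, ({q.1, q.2} : Multiset ι).count t + ({r.1, r.2} : Multiset ι).count t = 1) ∨
      ∀ t, ({q.1, q.2} : Multiset ι).count t = 0 ∨ ({r.1, r.2} : Multiset ι).count t = 0 := by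
  obtain ⟨a, b⟩ := q
  obtain ⟨c, d⟩ := r
  simp only [ne_eq, Prod.mk.injEq, Prod.swap_prod_mk] at hq hs
  by_contra! h
  obtain ⟨h1, t, hq, hr⟩ := h
  simp only [Multiset.insert_eq_cons, Multiset.count_cons, Multiset.count_singleton, ne_eq]
    at h1 hq hr
  have := h1 a; have := h1 b; have := h1 c; have := h1 d
  grind

theorem Finset.prod_apply_add_eq_prod_mul_prod {ι : Type*} [Fintype ι] {m : ι → ℕ → ℝ}
    (h0 : ∀ t, m t 0 = 1) (h1 : ∀ t, m t 1 = 0) {a b : ι → ℕ}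
    (hab : (∃ t, a t + b t = 1) ∨ ∀ t, a t = 0 ∨ b t = 0) :
    ∏ t, m t (a t + b t) = (∏ t, m t (a t)) * ∏ t, m t (b t) := by
  rcases hab with ⟨t, ht⟩ | hab
  · have hzero : ∀ c : ι → ℕ, c t = 1 → ∏ t, m t (c t) = 0 := fun c hc =>
      Finset.prod_eq_zero (Finset.mem_univ t) (by rw [hc, h1])
    rw [hzero _ ht]
    rcases Nat.add_eq_one_iff.mp ht with ⟨-, hb⟩ | ⟨ha, -⟩
    · simp [hzero _ hb]
    · simp [hzero _ ha]
  · rw [← Finset.prod_mul_distrib]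
    refine Finset.prod_congr rfl fun t _ => ?_
    rcases hab t with h | h <;> simp [h, h0]

section Moments

variable {Ω : Type*} [MeasurableSpace Ω] {μ : Measure Ω}

theorem memLp_two_mul_of_memLp_four {X Y : Ω → ℝ} (hX : MemLp X 4 μ) (hY : MemLp Y 4 μ) :
    MemLp (fun ω => X ω * Y ω) 2 μ :=
  have : ENNReal.HolderTriple 4 4 2 := ⟨by
    rw [← two_mul, show (4 : ℝ≥0∞) = 2 * 2 by norm_num, ENNReal.mul_inv (by simp) (by simp),
      ← mul_assoc, ENNReal.mul_inv_cancel two_ne_zero ENNReal.ofNat_ne_top, one_mul]⟩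
  hY.mul hX

theorem integral_mul_sq_le {X Y : Ω → ℝ} {c : ℝ} (hX : MemLp X 4 μ) (hY : MemLp Y 4 μ)
    (hX4 : ∫ ω, X ω ^ 4 ∂μ ≤ c) (hY4 : ∫ ω, Y ω ^ 4 ∂μ ≤ c) :
    ∫ ω, (X ω * Y ω) ^ 2 ∂μ ≤ c := by
  have hint : ∀ {Z : Ω → ℝ}, MemLp Z 4 μ → Integrable (fun ω => Z ω ^ 4) μ := fun hZ => by
    simpa [Even.pow_abs ⟨2, rfl⟩] using hZ.integrable_norm_pow (p := 4) (by norm_num)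
  calc ∫ ω, (X ω * Y ω) ^ 2 ∂μ ≤ ∫ ω, (X ω ^ 4 + Y ω ^ 4) / 2 ∂μ :=
        integral_mono (memLp_two_mul_of_memLp_four hX hY).integrable_sq
          (((hint hX).add (hint hY)).div_const 2) fun ω => by
            nlinarith [sq_nonneg (X ω ^ 2 - Y ω ^ 2)]
    _ ≤ c := by
        rw [integral_div, integral_add (hint hX) (hint hY)]
        linarith

theorem abs_covariance_le_of_variance_le [IsFiniteMeasure μ] {X Y : Ω → ℝ} {c : ℝ}
    (hX : MemLp X 2 μ) (hY : MemLp Y 2 μ) (hXc : Var[X; μ] ≤ c) (hYc : Var[Y; μ] ≤ c) :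
    |cov[X, Y; μ]| ≤ c := by
  have := variance_add hX hY
  have := variance_sub hX hY
  have := variance_nonneg (X + Y) μ
  have := variance_nonneg (X - Y) μ
  exact abs_le.mpr ⟨by linarith, by linarith⟩

theorem integral_sub_const_sq [IsProbabilityMeasure μ] {Y : Ω → ℝ} (hY : MemLp Y 2 μ) (c : ℝ) :
    ∫ ω, (Y ω - c) ^ 2 ∂μ = Var[Y; μ] + (μ[Y] - c) ^ 2 := by
  rw [← variance_sub_const hY.1 c,
    variance_eq_sub (X := fun ω => Y ω - c) (hY.sub (memLp_const c)),
    integral_sub (hY.integrable one_le_two) (integrable_const c), integral_const]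
  simp

theorem measureReal_le_abs_le_integral_sq_div {Z : Ω → ℝ} (hZ : MemLp Z 2 μ) {δ : ℝ}
    (hδ : 0 < δ) : μ.real {ω | δ ≤ |Z ω|} ≤ (∫ ω, Z ω ^ 2 ∂μ) / δ ^ 2 := by
  have hset : {ω | δ ≤ |Z ω|} = {ω | δ ^ 2 ≤ Z ω ^ 2} := by
    ext ω
    change δ ≤ |Z ω| ↔ δ ^ 2 ≤ Z ω ^ 2
    rw [← sq_abs (Z ω), sq_le_sq₀ hδ.le (abs_nonneg _)]
  rw [hset, le_div_iff₀ (by positivity), mul_comm]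
  exact mul_meas_ge_le_integral_of_nonneg (ae_of_all _ fun ω => sq_nonneg _) hZ.integrable_sq _

theorem tendsto_measure_le_abs_of_tendsto_integral_sq [IsFiniteMeasure μ] {α : Type*}
    {l : Filter α} {Z : α → Ω → ℝ} (hZ : ∀ n, MemLp (Z n) 2 μ)
    (h : Tendsto (fun n => ∫ ω, Z n ω ^ 2 ∂μ) l (nhds 0)) {δ : ℝ} (hδ : 0 < δ) :
    Tendsto (fun n => μ {ω | δ ≤ |Z n ω|}) l (nhds 0) := by
  refine (ENNReal.tendsto_toReal_iff (fun n => measure_ne_top _ _) ENNReal.zero_ne_top).mp ?_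
  rw [ENNReal.toReal_zero]
  refine squeeze_zero (fun n => ENNReal.toReal_nonneg)
    (fun n => measureReal_le_abs_le_integral_sq_div (hZ n) hδ) ?_
  simpa using h.div_const (δ ^ 2)

end Moments

section QuadraticForm

variable {ι Ω : Type*} [MeasurableSpace Ω] {μ : Measure Ω} {ε : ι → Ω → ℝ} {σ2 c3 : ℝ}

theorem ProbabilityTheory.iIndepFun.integral_multiset_prod_map [Fintype ι] [DecidableEq ι]
    (hind : iIndepFun ε μ) (hε : ∀ i, AEMeasurable (ε i) μ) (s : Multiset ι) :
    ∫ ω, (s.map (ε · ω)).prod ∂μ = ∏ t, ∫ ω, ε t ω ^ s.count t ∂μ := by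
  have hcount : ∀ ω, (s.map (ε · ω)).prod = ∏ t, ε t ω ^ s.count t := fun ω => by
    rw [Finset.prod_multiset_map_count]
    exact Finset.prod_subset (Finset.subset_univ _) fun t _ ht => by
      simp [Multiset.count_eq_zero.mpr (by simpa using ht)]
  simp_rw [hcount]
  exact hind.integral_fun_prod_comp hε fun t => (continuous_pow _).aestronglyMeasurable

theorem integral_mul_eq_ite [DecidableEq ι] (hind : iIndepFun ε μ)
    (hL4 : ∀ i, MemLp (ε i) 4 μ) (hmean : ∀ i, ∫ ω, ε i ω ∂μ = 0)
    (hvar : ∀ i, ∫ ω, ε i ω ^ 2 ∂μ = σ2) (i k : ι) :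
    ∫ ω, ε i ω * ε k ω ∂μ = if i = k then σ2 else 0 := by
  split_ifs with hik
  · simp [hik, ← sq, hvar]
  · rw [(hind.indepFun hik).integral_fun_mul_eq_mul_integral (hL4 i).1 (hL4 k).1, hmean,
      zero_mul]

/-- An index occurring exactly once among `q.1, q.2, r.1, r.2` makes both `E[Y_q Y_r]` and
`E[Y_q] E[Y_r]` vanish; otherwise the two index pairs are disjoint and the moments factor. -/
theorem covariance_mul_eq_zero [Fintype ι] [DecidableEq ι] [IsProbabilityMeasure μ]
    (hind : iIndepFun ε μ) (hL4 : ∀ i, MemLp (ε i) 4 μ) (hmean : ∀ i, ∫ ω, ε i ω ∂μ = 0)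
    {q r : ι × ι} (hq : r ≠ q) (hs : r ≠ q.swap) :
    cov[fun ω => ε q.1 ω * ε q.2 ω, fun ω => ε r.1 ω * ε r.2 ω; μ] = 0 := by
  have hprod := hind.integral_multiset_prod_map fun i => (hL4 i).1.aemeasurable
  rw [covariance_eq_sub (memLp_two_mul_of_memLp_four (hL4 _) (hL4 _))
    (memLp_two_mul_of_memLp_four (hL4 _) (hL4 _)), sub_eq_zero]
  have h := hprod ({q.1, q.2} + {r.1, r.2})
  have h1 := hprod {q.1, q.2}
  have h2 := hprod {r.1, r.2}
  simp only [Multiset.insert_eq_cons, Multiset.map_add, Multiset.prod_add, Multiset.map_cons,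
    Multiset.prod_cons, Multiset.map_singleton, Multiset.prod_singleton, Multiset.count_add]
    at h h1 h2
  simp only [Pi.mul_apply]
  rw [h, h1, h2]
  refine Finset.prod_apply_add_eq_prod_mul_prod (m := fun t k => ∫ ω, ε t ω ^ k ∂μ)
    (by simp) (by simpa using hmean) ?_
  simpa only [Multiset.insert_eq_cons] using
    Multiset.exists_count_pair_add_eq_one_or_disjoint hq hs

theorem abs_covariance_mul_le [Fintype ι] [DecidableEq ι] [IsProbabilityMeasure μ]
    (hind : iIndepFun ε μ) (hL4 : ∀ i, MemLp (ε i) 4 μ) (hmean : ∀ i, ∫ ω, ε i ω ∂μ = 0)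
    (hmom4 : ∀ i, ∫ ω, ε i ω ^ 4 ∂μ ≤ c3) (q r : ι × ι) :
    |cov[fun ω => ε q.1 ω * ε q.2 ω, fun ω => ε r.1 ω * ε r.2 ω; μ]|
      ≤ c3 * ((if r = q then 1 else 0) + (if r = q.swap then 1 else 0)) := by
  have hY : ∀ q : ι × ι, MemLp (fun ω => ε q.1 ω * ε q.2 ω) 2 μ := fun q =>
    memLp_two_mul_of_memLp_four (hL4 _) (hL4 _)
  have hV : ∀ q : ι × ι, Var[fun ω => ε q.1 ω * ε q.2 ω; μ] ≤ c3 := fun q =>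
    (variance_le_expectation_sq (hY q).1).trans
      (by simpa using integral_mul_sq_le (hL4 _) (hL4 _) (hmom4 _) (hmom4 _))
  have hcov := abs_covariance_le_of_variance_le (hY q) (hY r) (hV q) (hV r)
  by_cases h : r = q ∨ r = q.swap
  · refine hcov.trans (le_mul_of_one_le_right ((abs_nonneg _).trans hcov) ?_)
    rcases h with h | h <;> simp only [h, if_true] <;> split_ifs <;> norm_num
  · push Not at h
    rw [covariance_mul_eq_zero hind hL4 hmean h.1 h.2, abs_zero, if_neg h.1, if_neg h.2]
    simp

theorem memLp_quadratic_form [Fintype ι] (hL4 : ∀ i, MemLp (ε i) 4 μ) (B : Matrix ι ι ℝ) :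
    MemLp (fun ω => ∑ i, ∑ k, B i k * (ε i ω * ε k ω)) 2 μ :=
  memLp_finsetSum _ fun i _ => memLp_finsetSum _ fun k _ =>
    (memLp_two_mul_of_memLp_four (hL4 i) (hL4 k)).const_mul _

theorem integral_quadratic_form [Fintype ι] [DecidableEq ι] [IsProbabilityMeasure μ]
    (hind : iIndepFun ε μ) (hL4 : ∀ i, MemLp (ε i) 4 μ) (hmean : ∀ i, ∫ ω, ε i ω ∂μ = 0)
    (hvar : ∀ i, ∫ ω, ε i ω ^ 2 ∂μ = σ2) (B : Matrix ι ι ℝ) :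
    ∫ ω, ∑ i, ∑ k, B i k * (ε i ω * ε k ω) ∂μ = σ2 * ∑ i, B i i := by
  have hint : ∀ i k, Integrable (fun ω => B i k * (ε i ω * ε k ω)) μ := fun i k =>
    ((memLp_two_mul_of_memLp_four (hL4 i) (hL4 k)).integrable one_le_two).const_mul _
  rw [integral_finsetSum _ fun i _ => integrable_finsetSum _ fun k _ => hint i k,
    Finset.mul_sum]
  refine Finset.sum_congr rfl fun i _ => ?_
  simp_rw [integral_finsetSum _ fun k _ => hint i k, integral_const_mul,
    integral_mul_eq_ite hind hL4 hmean hvar, mul_ite, mul_zero, Finset.sum_ite_eq,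
    Finset.mem_univ, if_true, mul_comm]

theorem variance_quadratic_form_le [Fintype ι] [DecidableEq ι] [IsProbabilityMeasure μ]
    (hind : iIndepFun ε μ) (hL4 : ∀ i, MemLp (ε i) 4 μ) (hmean : ∀ i, ∫ ω, ε i ω ∂μ = 0)
    (hmom4 : ∀ i, ∫ ω, ε i ω ^ 4 ∂μ ≤ c3) (B : Matrix ι ι ℝ) :
    Var[fun ω => ∑ i, ∑ k, B i k * (ε i ω * ε k ω); μ] ≤ 2 * c3 * ∑ i, ∑ k, B i k ^ 2 := by
  set Y : ι × ι → Ω → ℝ := fun q ω => ε q.1 ω * ε q.2 ω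
  have hY : ∀ q, MemLp (Y q) 2 μ := fun q => memLp_two_mul_of_memLp_four (hL4 _) (hL4 _)
  have hc3 : ∀ i : ι, 0 ≤ c3 := fun i =>
    (integral_nonneg fun ω => by positivity).trans (hmom4 i)
  have hsum : (fun ω => ∑ i, ∑ k, B i k * (ε i ω * ε k ω))
      = fun ω => ∑ q : ι × ι, B q.1 q.2 * Y q ω :=
    funext fun ω => (Fintype.sum_prod_type' fun i k => B i k * (ε i ω * ε k ω)).symm
  have hcov : ∀ q r : ι × ι, cov[fun ω => B q.1 q.2 * Y q ω, fun ω => B r.1 r.2 * Y r ω; μ]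
      ≤ c3 * (|B q.1 q.2| * ((if r = q then |B r.1 r.2| else 0)
        + (if r = q.swap then |B r.1 r.2| else 0))) := by
    intro q r
    rw [covariance_const_mul_left, covariance_const_mul_right]
    calc B q.1 q.2 * (B r.1 r.2 * cov[Y q, Y r; μ])
        ≤ |B q.1 q.2| * |B r.1 r.2| * |cov[Y q, Y r; μ]| := by
          rw [← abs_mul, ← abs_mul, ← mul_assoc]; exact le_abs_self _
      _ ≤ |B q.1 q.2| * |B r.1 r.2|
          * (c3 * ((if r = q then 1 else 0) + (if r = q.swap then 1 else 0))) := by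
          gcongr; exact abs_covariance_mul_le hind hL4 hmean hmom4 q r
      _ = _ := by split_ifs <;> ring
  rw [hsum, variance_fun_sum fun q => (hY q).const_mul _]
  calc ∑ q, ∑ r, cov[fun ω => B q.1 q.2 * Y q ω, fun ω => B r.1 r.2 * Y r ω; μ]
      ≤ ∑ q : ι × ι, c3 * (B q.1 q.2 ^ 2 + |B q.1 q.2| * |B q.2 q.1|) := by
        refine Finset.sum_le_sum fun q _ => (Finset.sum_le_sum fun r _ => hcov q r).trans_eq ?_
        simp only [← Finset.mul_sum, Finset.sum_add_distrib, Finset.sum_ite_eq', Finset.mem_univ,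
          if_true, Prod.fst_swap, Prod.snd_swap]
        rw [mul_add, abs_mul_abs_self, sq]
    _ ≤ ∑ q : ι × ι, c3 * (B q.1 q.2 ^ 2 + (B q.1 q.2 ^ 2 + B q.2 q.1 ^ 2) / 2) := by
        refine Finset.sum_le_sum fun q _ => mul_le_mul_of_nonneg_left ?_ (hc3 q.1)
        nlinarith [sq_abs (B q.1 q.2), sq_abs (B q.2 q.1),
          sq_nonneg (|B q.1 q.2| - |B q.2 q.1|)]
    _ = 2 * c3 * ∑ i, ∑ k, B i k ^ 2 := by
        have hswap : ∑ q : ι × ι, B q.2 q.1 ^ 2 = ∑ q : ι × ι, B q.1 q.2 ^ 2 :=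
          Equiv.sum_comp (Equiv.prodComm ι ι) fun q => B q.1 q.2 ^ 2
        rw [← Fintype.sum_prod_type', Finset.sum_congr rfl fun q _ => show
          c3 * (B q.1 q.2 ^ 2 + (B q.1 q.2 ^ 2 + B q.2 q.1 ^ 2) / 2)
            = 3 / 2 * c3 * B q.1 q.2 ^ 2 + c3 / 2 * B q.2 q.1 ^ 2 by ring,
          Finset.sum_add_distrib, ← Finset.mul_sum, ← Finset.mul_sum, hswap]
        ring

theorem integral_const_mul_quadratic_form_sub_sq_le [Fintype ι] [DecidableEq ι]
    [IsProbabilityMeasure μ] (hind : iIndepFun ε μ) (hL4 : ∀ i, MemLp (ε i) 4 μ)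
    (hmean : ∀ i, ∫ ω, ε i ω ∂μ = 0) (hvar : ∀ i, ∫ ω, ε i ω ^ 2 ∂μ = σ2)
    (hmom4 : ∀ i, ∫ ω, ε i ω ^ 4 ∂μ ≤ c3) (B : Matrix ι ι ℝ) (a c : ℝ) :
    ∫ ω, (a * ∑ i, ∑ k, B i k * (ε i ω * ε k ω) - c) ^ 2 ∂μ
      ≤ a ^ 2 * (2 * c3 * ∑ i, ∑ k, B i k ^ 2) + (a * (σ2 * ∑ i, B i i) - c) ^ 2 := by
  rw [integral_sub_const_sq ((memLp_quadratic_form hL4 B).const_mul a), variance_const_mul,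
    integral_const_mul, integral_quadratic_form hind hL4 hmean hvar]
  gcongr
  exact variance_quadratic_form_le hind hL4 hmean hmom4 B

end QuadraticForm

theorem Matrix.sum_sq_mul_mul_le {m p : Type*} [Fintype m] [DecidableEq m] [Fintype p]
    (X : Matrix m p ℝ) (A : Matrix m m ℝ) {c : ℝ} (hrow : ∀ i, ∑ l, X i l ^ 2 ≤ c ^ 2)
    (hdiag : ∀ i, A i i = 1) (j j' : p) :
    ∑ i, ∑ k, (X i j * A i k * X k j') ^ 2
      ≤ c ^ 4 * (Fintype.card m + ∑ i, ∑ k, if i = k then 0 else A i k ^ 2) := by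
  have hX : ∀ i l, X i l ^ 2 ≤ c ^ 2 := fun i l =>
    (Finset.single_le_sum (fun l _ => sq_nonneg (X i l)) (Finset.mem_univ l)).trans (hrow i)
  have hA : ∀ i k, A i k ^ 2 = (if i = k then 1 else 0) + (if i = k then 0 else A i k ^ 2) :=
    fun i k => by split_ifs with h <;> simp [h, hdiag]
  calc ∑ i, ∑ k, (X i j * A i k * X k j') ^ 2
      = ∑ i, ∑ k, X i j ^ 2 * X k j' ^ 2 * A i k ^ 2 :=
        Finset.sum_congr rfl fun i _ => Finset.sum_congr rfl fun k _ => by ring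
    _ ≤ ∑ i, ∑ k, c ^ 2 * c ^ 2 * A i k ^ 2 :=
        Finset.sum_le_sum fun i _ => Finset.sum_le_sum fun k _ => mul_le_mul_of_nonneg_right
          (mul_le_mul (hX i j) (hX k j') (sq_nonneg _) (sq_nonneg c)) (sq_nonneg _)
    _ = c ^ 4 * ∑ i, ∑ k, ((if i = k then 1 else 0) + (if i = k then 0 else A i k ^ 2)) := by
        simp_rw [Finset.mul_sum, ← hA]
        ring_nf
    _ = c ^ 4 * (Fintype.card m + ∑ i, ∑ k, if i = k then 0 else A i k ^ 2) := by
        simp [Finset.sum_add_distrib]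

theorem tendsto_one_div_sq_mul_add {o : ℕ → ℝ} (C : ℝ)
    (ho : Tendsto (fun n : ℕ => 1 / (n : ℝ) ^ 2 * o n) atTop (nhds 0)) :
    Tendsto (fun n : ℕ => (1 / (n : ℝ)) ^ 2 * (C * (n + o n))) atTop (nhds 0) := by
  have hsplit : ∀ n : ℕ, (1 / (n : ℝ)) ^ 2 * (C * (n + o n))
      = C * (1 / (n : ℝ)) + C * (1 / (n : ℝ) ^ 2 * o n) := by
    intro n
    rcases Nat.eq_zero_or_pos n with rfl | hn
    · simp
    · field_simp
  simp_rw [hsplit]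
  simpa using (tendsto_one_div_atTop_nhds_zero_nat.const_mul C).add (ho.const_mul C)

theorem stmt16_general {Ω : Type*} [MeasurableSpace Ω] (μ : Measure Ω) [IsProbabilityMeasure μ]
    {p : ℕ} (σ2 c3 c4 : ℝ)
    (Sig : Matrix (Fin p) (Fin p) ℝ)
    (X : (n : ℕ) → Matrix (Fin n) (Fin p) ℝ)
    (A : (n : ℕ) → Matrix (Fin n) (Fin n) ℝ)
    (ε : (n : ℕ) → Fin n → Ω → ℝ)
    (hindep : ∀ n, iIndepFun (ε n) μ)
    (hL4 : ∀ n i, MemLp (ε n i) 4 μ)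
    (hmean : ∀ n i, ∫ ω, ε n i ω ∂μ = 0)
    (hvar : ∀ n i, ∫ ω, (ε n i ω) ^ 2 ∂μ = σ2)
    (hmom4 : ∀ n i, ∫ ω, (ε n i ω) ^ 4 ∂μ ≤ c3)
    (hrow : ∀ n i, ∑ j, (X n i j) ^ 2 ≤ c4 ^ 2)
    (hXX : ∀ j j', Tendsto (fun n : ℕ => (1 / (n : ℝ)) * ∑ i, X n i j * X n i j')
      atTop (nhds (Sig j j')))
    (hAdiag : ∀ n (i : Fin n), A n i i = 1)
    (hAoff : Tendsto (fun n : ℕ =>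
        (1 / (n : ℝ) ^ 2) * ∑ i : Fin n, ∑ i' : Fin n,
          (if i = i' then (0 : ℝ) else (A n i i') ^ 2))
      atTop (nhds 0)) :
    ∀ j j',
      Tendsto (fun n : ℕ =>
          ∫ ω, ((1 / (n : ℝ)) * (∑ i : Fin n, ∑ i' : Fin n,
            X n i j * (A n i i' * ε n i ω * ε n i' ω) * X n i' j')
            - σ2 * Sig j j') ^ 2 ∂μ)
        atTop (nhds 0) ∧
      ∀ δ > (0 : ℝ),
        Tendsto (fun n : ℕ =>
            μ {ω | δ ≤ |(1 / (n : ℝ)) * (∑ i : Fin n, ∑ i' : Fin n,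
              X n i j * (A n i i' * ε n i ω * ε n i' ω) * X n i' j')
              - σ2 * Sig j j'|})
          atTop (nhds 0) := by
  intro j j'
  set B : (n : ℕ) → Matrix (Fin n) (Fin n) ℝ := fun n i k => X n i j * A n i k * X n k j'
  have hQ : ∀ (n : ℕ) ω, ∑ i : Fin n, ∑ i' : Fin n,
      X n i j * (A n i i' * ε n i ω * ε n i' ω) * X n i' j'
        = ∑ i, ∑ k, B n i k * (ε n i ω * ε n k ω) := fun n ω =>
    Finset.sum_congr rfl fun i _ => Finset.sum_congr rfl fun k _ => by ring
  simp only [hQ]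
  have hc3 : 0 ≤ c3 := (integral_nonneg fun ω => by positivity).trans (hmom4 1 0)
  have hdev : ∀ n : ℕ, ∫ ω, ((1 / (n : ℝ)) * ∑ i, ∑ k, B n i k * (ε n i ω * ε n k ω)
        - σ2 * Sig j j') ^ 2 ∂μ
      ≤ (1 / (n : ℝ)) ^ 2 * (2 * c3 * c4 ^ 4 * (n + ∑ i : Fin n, ∑ k : Fin n,
          if i = k then 0 else A n i k ^ 2))
        + (σ2 * ((1 / (n : ℝ)) * ∑ i, X n i j * X n i j') - σ2 * Sig j j') ^ 2 := fun n => by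
    refine (integral_const_mul_quadratic_form_sub_sq_le (hindep n) (hL4 n) (hmean n) (hvar n)
      (hmom4 n) (B n) _ _).trans (add_le_add (mul_le_mul_of_nonneg_left ?_ (sq_nonneg _)) (le_of_eq ?_))
    · rw [mul_assoc (2 * c3) (c4 ^ 4)]
      exact mul_le_mul_of_nonneg_left
        (by simpa using (X n).sum_sq_mul_mul_le (A n) (hrow n) (hAdiag n) j j') (by linarith)
    · simp only [B, hAdiag, mul_one]
      ring
  have hlim := (tendsto_one_div_sq_mul_add (2 * c3 * c4 ^ 4) hAoff).add
    ((((hXX j j').const_mul σ2).sub_const (σ2 * Sig j j')).pow 2)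
  rw [sub_self, zero_pow two_ne_zero, add_zero] at hlim
  have hL2 := squeeze_zero (fun n => integral_nonneg fun ω => sq_nonneg _) hdev hlim
  exact ⟨hL2, fun δ hδ => tendsto_measure_le_abs_of_tendsto_integral_sq
    (fun n => ((memLp_quadratic_form (hL4 n) (B n)).const_mul _).sub (memLp_const _)) hL2 hδ⟩

theorem stmt16 {Ω : Type*} [MeasurableSpace Ω] (μ : Measure Ω) [IsProbabilityMeasure μ]
    {p : ℕ} (σ2 c3 c4 : ℝ) (hσ : 0 < σ2)
    (Sig : Matrix (Fin p) (Fin p) ℝ)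
    (X : (n : ℕ) → Matrix (Fin n) (Fin p) ℝ)
    (A : (n : ℕ) → Matrix (Fin n) (Fin n) ℝ)
    (ε : (n : ℕ) → Fin n → Ω → ℝ)
    (hmeas : ∀ n i, Measurable (ε n i))
    (hindep : ∀ n, iIndepFun (ε n) μ)
    (hL4 : ∀ n i, MemLp (ε n i) 4 μ)
    (hmean : ∀ n i, ∫ ω, ε n i ω ∂μ = 0)
    (hvar : ∀ n i, ∫ ω, (ε n i ω) ^ 2 ∂μ = σ2)
    (hmom4 : ∀ n i, ∫ ω, (ε n i ω) ^ 4 ∂μ ≤ c3)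
    (hrow : ∀ n i, ∑ j, (X n i j) ^ 2 ≤ c4 ^ 2)
    (hXX : ∀ j j', Tendsto (fun n : ℕ => (1 / (n : ℝ)) * ∑ i, X n i j * X n i j')
      atTop (nhds (Sig j j')))
    (hAdiag : ∀ n (i : Fin n), A n i i = 1)
    (hAbd : ∀ n (i i' : Fin n), |A n i i'| ≤ 1)
    (hAoff : Tendsto (fun n : ℕ =>
        (1 / (n : ℝ) ^ 2) * ∑ i : Fin n, ∑ i' : Fin n,
          (if i = i' then (0 : ℝ) else (A n i i') ^ 2))
      atTop (nhds 0)) :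
    ∀ j j',
      Tendsto (fun n : ℕ =>
          ∫ ω, ((1 / (n : ℝ)) * (∑ i : Fin n, ∑ i' : Fin n,
            X n i j * (A n i i' * ε n i ω * ε n i' ω) * X n i' j')
            - σ2 * Sig j j') ^ 2 ∂μ)
        atTop (nhds 0) ∧
      ∀ δ > (0 : ℝ),
        Tendsto (fun n : ℕ =>
            μ {ω | δ ≤ |(1 / (n : ℝ)) * (∑ i : Fin n, ∑ i' : Fin n,
              X n i j * (A n i i' * ε n i ω * ε n i' ω) * X n i' j')
              - σ2 * Sig j j'|})
          atTop (nhds 0) :=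
  stmt16_general μ σ2 c3 c4 Sig X A ε hindep hL4 hmean hvar hmom4 hrow hXX hAdiag hAoff
end
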